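/- arXiv:1710.06378 — 2 statements merged into one kernel-verified Lean document; each statement's English description precedes it below -/
import Mathlib

section
/- Let s ∈ (0,1], δ ∈ (0,1), ρ > -log(2/(1+δ) - 1)/log(1+δ), and λ* ∈ (0,1/2) satisfy -λ* log λ* - (1-λ*) log(1-λ*) = s·log(1+δ). Then for every λ < λ*, the sum Σ_{w=1}^{⌊λn⌋} C(n,w) · (1/2 + (1/2)(1 - 2ρ·log(sn)/(sn))^w)^{sn} tends to 0 as n → ∞. -/
open Filter Real Topology

/-!
Write `m = s n` and `ε = 2 ρ log m / m`, and sort the terms by the size of `ε w`.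
If `ε w ≤ 1`, the base is at most `exp (-ε w / 4)`, so the term is at most
`(n m ^ (-ρ/2)) ^ w`: a geometric series whose ratio tends to `0` because `ρ > 2`.
If `1 ≤ ε w ≤ T`, then `w ≤ μ n` with `μ = O(1 / log n)`, so `C(n, w) ≤ exp (n H(μ))`
is `exp (o(n))`, while the base is at most `exp (-1/4)`.
If `ε w ≥ T`, the base is at most `(1 + e^{-T}) / 2` and `C(n, w) ≤ exp (n H(λ))`; since
`H(λ) < H(λ*) = s log (1 + δ) < s log 2`, a large `T` makes the term exponentially small.
The last two regimes thus contribute at most `n` exponentially small terms.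
-/

lemma one_add_exp_neg_div_two_le {x : ℝ} (hx0 : 0 ≤ x) (hx1 : x ≤ 1) :
    (1 + exp (-x)) / 2 ≤ exp (-x / 4) := by
  set u := exp (-x / 4)
  have hu4 : exp (-x) = u ^ 4 := by rw [← exp_nat_mul]; ring_nf
  have hu1 : u ≤ 1 := exp_le_one_iff.2 (by linarith)
  -- `(1 + u ^ 4) / 2 ≤ u` is `(1 - u) (u ^ 3 + u ^ 2 + u - 1) ≥ 0`, and `u ≥ 3/4` suffices
  have hu34 : 3 / 4 ≤ u := by linarith [add_one_le_exp (-x / 4)]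
  rw [hu4]
  nlinarith [mul_nonneg (sub_nonneg.2 hu1) (by nlinarith : (0 : ℝ) ≤ u ^ 3 + u ^ 2 + u - 1)]

lemma one_sub_pow_le_exp_neg {ε : ℝ} (hε : ε ≤ 1) (w : ℕ) :
    (1 - ε) ^ w ≤ exp (-(ε * w)) := by
  calc (1 - ε) ^ w ≤ exp (-ε) ^ w := pow_le_pow_left₀ (by linarith) (one_sub_le_exp_neg ε) w
    _ = exp (-(ε * w)) := by rw [← exp_nat_mul]; ring_nf

lemma Nat.choose_le_exp_mul_binEntropy {n w : ℕ} {μ : ℝ} (hμ0 : 0 < μ) (hμ : μ ≤ 1 / 2)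
    (hw : (w : ℝ) ≤ μ * n) : (n.choose w : ℝ) ≤ exp (n * binEntropy μ) := by
  have h1μ : 0 < 1 - μ := by linarith
  have hwn : w ≤ n := by
    have : (w : ℝ) ≤ n := hw.trans (by nlinarith [(n.cast_nonneg : (0 : ℝ) ≤ n)])
    exact_mod_cast this
  have hterm : μ ^ w * (1 - μ) ^ (n - w) * n.choose w ≤ 1 := by
    calc μ ^ w * (1 - μ) ^ (n - w) * n.choose w
        ≤ ∑ k ∈ Finset.range (n + 1), μ ^ k * (1 - μ) ^ (n - k) * n.choose k :=
          Finset.single_le_sum (f := fun k => μ ^ k * (1 - μ) ^ (n - k) * (n.choose k : ℝ))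
            (fun k _ => by positivity) (Finset.mem_range.2 (Nat.lt_succ_of_le hwn))
      _ = 1 := by rw [← add_pow, add_sub_cancel, one_pow]
  -- since `μ ≤ 1 - μ`, the weight `μ ^ w (1 - μ) ^ (n - w)` decreases in `w`
  have hweight : exp (-(n * binEntropy μ)) ≤ μ ^ w * (1 - μ) ^ (n - w) := by
    rw [← exp_log (by positivity : 0 < μ ^ w * (1 - μ) ^ (n - w)), exp_le_exp,
      log_mul (by positivity) (by positivity), Real.log_pow, Real.log_pow, Nat.cast_sub hwn,
      binEntropy, log_inv, log_inv]
    nlinarith [log_le_log hμ0 (by linarith : μ ≤ 1 - μ)]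
  rw [← le_div_iff₀' (by positivity)] at hterm
  calc (n.choose w : ℝ) ≤ 1 / (μ ^ w * (1 - μ) ^ (n - w)) := hterm
    _ ≤ 1 / exp (-(n * binEntropy μ)) := one_div_le_one_div_of_le (exp_pos _) hweight
    _ = exp (n * binEntropy μ) := by rw [exp_neg, one_div, inv_inv]

lemma half_add_half_one_sub_pow_le {ε T : ℝ} {w : ℕ} (hε : ε ≤ 1) (hT : T ≤ ε * w) :
    1 / 2 + 1 / 2 * (1 - ε) ^ w ≤ (1 + exp (-T)) / 2 := by
  have := (one_sub_pow_le_exp_neg hε w).trans (exp_le_exp.2 (neg_le_neg hT))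
  linarith

lemma choose_mul_rpow_le_of_mul_le_one {n w : ℕ} {ε m : ℝ} (hm : 0 ≤ m) (hε0 : 0 ≤ ε)
    (hε1 : ε ≤ 1) (hw : ε * w ≤ 1) :
    (n.choose w : ℝ) * (1 / 2 + 1 / 2 * (1 - ε) ^ w) ^ m ≤ (n * exp (-(ε * m / 4))) ^ w := by
  have hbase0 : 0 ≤ 1 / 2 + 1 / 2 * (1 - ε) ^ w := by
    have := pow_nonneg (sub_nonneg.2 hε1) w; positivity
  have hbase : 1 / 2 + 1 / 2 * (1 - ε) ^ w ≤ exp (-(ε * w) / 4) :=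
    (half_add_half_one_sub_pow_le hε1 le_rfl).trans
      (one_add_exp_neg_div_two_le (by positivity) hw)
  calc (n.choose w : ℝ) * (1 / 2 + 1 / 2 * (1 - ε) ^ w) ^ m
      ≤ (n : ℝ) ^ w * exp (-(ε * w) / 4) ^ m := by
        gcongr
        exact_mod_cast n.choose_le_pow w
    _ = (n * exp (-(ε * m / 4))) ^ w := by
        rw [← exp_mul, mul_pow, ← exp_nat_mul]; ring_nf

lemma choose_mul_rpow_le_of_le_mul {n w : ℕ} {ε m T μ : ℝ} (hm : 0 ≤ m) (hε1 : ε ≤ 1)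
    (hT : T ≤ ε * w) (hμ0 : 0 < μ) (hμ : μ ≤ 1 / 2) (hw : (w : ℝ) ≤ μ * n) :
    (n.choose w : ℝ) * (1 / 2 + 1 / 2 * (1 - ε) ^ w) ^ m
      ≤ exp (n * binEntropy μ) * ((1 + exp (-T)) / 2) ^ m := by
  have hbase0 : 0 ≤ 1 / 2 + 1 / 2 * (1 - ε) ^ w := by
    have := pow_nonneg (sub_nonneg.2 hε1) w; positivity
  gcongr
  · exact Nat.choose_le_exp_mul_binEntropy hμ0 hμ hw
  · exact half_add_half_one_sub_pow_le hε1 hT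

lemma choose_mul_rpow_le_add {n w : ℕ} {ε m T μ lam : ℝ} (hm : 0 ≤ m) (hε0 : 0 < ε)
    (hε1 : ε ≤ 1) (hμT : T ≤ ε * (μ * n)) (hμ0 : 0 < μ) (hμ : μ ≤ 1 / 2)
    (hμH : n * binEntropy μ ≤ m / 8) (hlam0 : 0 < lam) (hlam : lam ≤ 1 / 2)
    (hw : (w : ℝ) ≤ lam * n) :
    (n.choose w : ℝ) * (1 / 2 + 1 / 2 * (1 - ε) ^ w) ^ m
      ≤ (n * exp (-(ε * m / 4))) ^ w + exp (-(m / 8))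
        + exp (n * binEntropy lam) * ((1 + exp (-T)) / 2) ^ m := by
  have hr : 0 ≤ (n * exp (-(ε * m / 4))) ^ w := by positivity
  have hm8 : 0 ≤ exp (-(m / 8)) := (exp_pos _).le
  have hq : 0 ≤ exp (n * binEntropy lam) * ((1 + exp (-T)) / 2) ^ m := by positivity
  rcases le_or_gt (ε * w) 1 with hsmall | hmid
  · linarith [choose_mul_rpow_le_of_mul_le_one (n := n) hm hε0.le hε1 hsmall]
  rcases le_or_gt T (ε * w) with hlarge | hmid'
  · linarith [choose_mul_rpow_le_of_le_mul (n := n) hm hε1 hlarge hlam0 hlam hw]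
  have hwμ : (w : ℝ) ≤ μ * n := le_of_mul_le_mul_left (hmid'.le.trans hμT) hε0
  have hbase : (1 + exp (-1)) / 2 ≤ exp (-1 / 4) := one_add_exp_neg_div_two_le zero_le_one le_rfl
  have := choose_mul_rpow_le_of_le_mul (n := n) hm hε1 hmid.le hμ0 hμ hwμ
  calc (n.choose w : ℝ) * (1 / 2 + 1 / 2 * (1 - ε) ^ w) ^ m
      ≤ exp (m / 8) * exp (-1 / 4) ^ m := by
        refine this.trans (mul_le_mul (exp_le_exp.2 hμH) ?_ (by positivity) (exp_pos _).le)
        exact rpow_le_rpow (by positivity) hbase hm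
    _ = exp (-(m / 8)) := by rw [← exp_mul, ← exp_add]; ring_nf
    _ ≤ _ := by linarith

lemma sum_choose_mul_rpow_le {n : ℕ} {ε m T μ lam : ℝ} (hm : 0 ≤ m) (hε0 : 0 < ε)
    (hε1 : ε ≤ 1) (hμT : T ≤ ε * (μ * n)) (hμ0 : 0 < μ) (hμ : μ ≤ 1 / 2)
    (hμH : n * binEntropy μ ≤ m / 8) (hlam0 : 0 < lam) (hlam : lam ≤ 1 / 2)
    (hr : n * exp (-(ε * m / 4)) < 1) :
    ∑ w ∈ Finset.Icc 1 ⌊lam * n⌋₊, (n.choose w : ℝ) * (1 / 2 + 1 / 2 * (1 - ε) ^ w) ^ m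
      ≤ n * exp (-(ε * m / 4)) / (1 - n * exp (-(ε * m / 4)))
        + n * (exp (-(m / 8)) + exp (n * binEntropy lam) * ((1 + exp (-T)) / 2) ^ m) := by
  set r := (n : ℝ) * exp (-(ε * m / 4))
  set W := ⌊lam * n⌋₊
  have hW : (W : ℝ) ≤ n :=
    (Nat.floor_le (by positivity)).trans (by nlinarith [(n.cast_nonneg : (0 : ℝ) ≤ n)])
  have hgeom : ∑ w ∈ Finset.Icc 1 W, r ^ w ≤ r / (1 - r) := by
    simpa [← Finset.Ico_add_one_right_eq_Icc] using
      geom_sum_Ico_le_of_lt_one (m := 1) (n := W + 1) (by positivity) hr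
  have hq : 0 ≤ exp (-(m / 8)) + exp (n * binEntropy lam) * ((1 + exp (-T)) / 2) ^ m := by
    positivity
  calc _ ≤ ∑ w ∈ Finset.Icc 1 W, (r ^ w + (exp (-(m / 8))
          + exp (n * binEntropy lam) * ((1 + exp (-T)) / 2) ^ m)) := by
        refine Finset.sum_le_sum fun w hw => ?_
        have hwW : (w : ℝ) ≤ lam * n :=
          (Nat.cast_le.2 (Finset.mem_Icc.1 hw).2).trans (Nat.floor_le (by positivity))
        rw [← add_assoc]
        exact choose_mul_rpow_le_add hm hε0 hε1 hμT hμ0 hμ hμH hlam0 hlam hwW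
    _ = ∑ w ∈ Finset.Icc 1 W, r ^ w + W * (exp (-(m / 8))
          + exp (n * binEntropy lam) * ((1 + exp (-T)) / 2) ^ m) := by
        rw [Finset.sum_add_distrib, Finset.sum_const, Nat.card_Icc, nsmul_eq_mul,
          Nat.add_sub_cancel]
    _ ≤ _ := add_le_add hgeom (mul_le_mul_of_nonneg_right hW hq)

lemma exists_pos_log_one_add_exp_neg_div_two_lt {c : ℝ} (hc : -log 2 < c) :
    ∃ T > 0, log ((1 + exp (-T)) / 2) < c := by
  have h : Tendsto (fun T => log ((1 + exp (-T)) / 2)) atTop (𝓝 (log ((1 + 0) / 2))) :=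
    ((tendsto_exp_neg_atTop_nhds_zero.const_add 1).div_const 2).log (by norm_num)
  rw [add_zero, one_div, log_inv] at h
  exact ((eventually_gt_atTop 0).and (h.eventually_lt_const hc)).exists

lemma tendsto_natCast_mul_rpow_neg {s ρ : ℝ} (hs : 0 < s) (hρ : 2 < ρ) :
    Tendsto (fun n : ℕ => n * (s * n) ^ (-(ρ / 2))) atTop (𝓝 0) := by
  have h := ((tendsto_rpow_neg_atTop (by linarith : 0 < ρ / 2 - 1)).comp
    tendsto_natCast_atTop_atTop).const_mul (s ^ (-(ρ / 2)))
  rw [mul_zero] at h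
  refine h.congr' ((eventually_gt_atTop 0).mono fun n hn => ?_)
  have hn : (0 : ℝ) < n := Nat.cast_pos.2 hn
  simp only [Function.comp_apply]
  rw [mul_rpow hs.le hn.le, show -(ρ / 2 - 1) = 1 + -(ρ / 2) by ring,
    rpow_add hn, rpow_one]
  ring

lemma tendsto_natCast_mul_exp_neg_mul {a : ℝ} (ha : 0 < a) :
    Tendsto (fun n : ℕ => n * exp (-(a * n))) atTop (𝓝 0) := by
  simpa [Function.comp_def] using (tendsto_rpow_mul_exp_neg_mul_atTop_nhds_zero 1 a ha).comp
    tendsto_natCast_atTop_atTop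

lemma tendsto_div_one_sub_add_natCast_mul_exp {s ρ a : ℝ} (hs : 0 < s) (hρ : 2 < ρ)
    (ha : 0 < a) :
    Tendsto (fun n : ℕ => n * (s * n) ^ (-(ρ / 2)) / (1 - n * (s * n) ^ (-(ρ / 2)))
      + n * (exp (-(s * n / 8)) + exp (-(a * n)))) atTop (𝓝 0) := by
  have hr := tendsto_natCast_mul_rpow_neg hs hρ
  have h := (hr.div (tendsto_const_nhds.sub hr) (by norm_num : (1 : ℝ) - 0 ≠ 0)).add
    ((tendsto_natCast_mul_exp_neg_mul (a := s / 8) (by positivity)).add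
      (tendsto_natCast_mul_exp_neg_mul ha))
  rw [zero_div, add_zero, zero_add] at h
  refine h.congr fun n => ?_
  simp only [Pi.div_apply]
  ring_nf

theorem tendsto_sum_choose_mul_rpow_zero {s ρ lam : ℝ} (hs : 0 < s) (hρ : 2 < ρ)
    (hlam0 : 0 < lam) (hlam : lam ≤ 1 / 2) (hH : binEntropy lam < s * log 2) :
    Tendsto (fun n : ℕ => ∑ w ∈ Finset.Icc 1 ⌊lam * (n : ℝ)⌋₊, (n.choose w : ℝ) *
      (1 / 2 + 1 / 2 * (1 - 2 * (ρ * log (s * n) / (s * n))) ^ w) ^ (s * (n : ℝ)))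
      atTop (𝓝 0) := by
  obtain ⟨T, hT0, hT⟩ := exists_pos_log_one_add_exp_neg_div_two_lt
    (c := -binEntropy lam / s) (by rw [lt_div_iff₀ hs]; linarith)
  set a := -(binEntropy lam + s * log ((1 + exp (-T)) / 2))
  have ha : 0 < a := by rw [lt_div_iff₀ hs] at hT; linarith
  have hsn : Tendsto (fun n : ℕ => s * n) atTop atTop :=
    tendsto_natCast_atTop_atTop.const_mul_atTop hs
  have hε : Tendsto (fun n : ℕ => 2 * (ρ * log (s * n) / (s * n))) atTop (𝓝 0) := by
    simpa [mul_div_assoc] using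
      ((isLittleO_log_id_atTop.tendsto_div_nhds_zero.comp hsn).const_mul ρ).const_mul 2
  have hμ : Tendsto (fun n : ℕ => T * s / (2 * ρ * log (s * n))) atTop (𝓝 0) :=
    tendsto_const_nhds.div_atTop ((tendsto_log_atTop.comp hsn).const_mul_atTop (by positivity))
  have hHμ := (binEntropy_continuous.tendsto 0).comp hμ
  rw [binEntropy_zero] at hHμ
  refine squeeze_zero' ?_ ?_ (tendsto_div_one_sub_add_natCast_mul_exp hs hρ ha)
  · filter_upwards [hε.eventually_le_const one_pos] with n hε1
    have := fun w : ℕ => pow_nonneg (sub_nonneg.2 hε1) w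
    positivity
  filter_upwards [hsn.eventually_gt_atTop 1, hε.eventually_le_const one_pos,
    hμ.eventually_le_const (by norm_num : (0 : ℝ) < 1 / 2),
    hHμ.eventually_le_const (by positivity : 0 < s / 8),
    (tendsto_natCast_mul_rpow_neg hs hρ).eventually_lt_const one_pos] with n hm hε1 hμ hHμ hr
  have hn : (0 : ℝ) < n := pos_of_mul_pos_right (hm.trans' one_pos) hs.le
  have hlog : 0 < log (s * n) := log_pos hm
  set ε := 2 * (ρ * log (s * n) / (s * n))
  -- chosen so that `ε * (μ * n) = T`
  set μ := T * s / (2 * ρ * log (s * n))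
  have hμT : T ≤ ε * (μ * n) := le_of_eq (by simp only [ε, μ]; field_simp)
  have hμH : n * binEntropy μ ≤ s * n / 8 := by
    have : binEntropy μ ≤ s / 8 := hHμ
    nlinarith
  have hr_eq : exp (-(ε * (s * n) / 4)) = (s * n) ^ (-(ρ / 2)) := by
    rw [rpow_def_of_pos (by positivity)]; simp only [ε]; field_simp; ring_nf
  have hq_eq : exp (n * binEntropy lam) * ((1 + exp (-T)) / 2) ^ (s * n) = exp (-(a * n)) := by
    rw [rpow_def_of_pos (by positivity), ← exp_add]; simp only [a]; ring_nf
  have key := sum_choose_mul_rpow_le (by positivity) (by positivity) hε1 hμT (by positivity) hμ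
    hμH hlam0 hlam (by rwa [hr_eq])
  rwa [hr_eq, hq_eq] at key

lemma two_lt_of_neg_log_div_log_lt {δ ρ : ℝ} (hδ : δ ∈ Set.Ioo (0 : ℝ) 1)
    (hρ : -log (2 / (1 + δ) - 1) / log (1 + δ) < ρ) : 2 < ρ := by
  obtain ⟨hδ0, hδ1⟩ := hδ
  have hlog : 0 < log (1 + δ) := log_pos (by linarith)
  refine lt_of_le_of_lt ?_ hρ
  rw [le_div_iff₀ hlog, show 2 / (1 + δ) - 1 = (1 - δ) / (1 + δ) by field_simp; ring,
    log_div (by linarith) (by linarith)]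
  have := log_nonpos (by nlinarith) (by nlinarith : (1 - δ) * (1 + δ) ≤ 1)
  rw [log_mul (by linarith) (by linarith)] at this
  linarith

/-- Key summation lemma: for `s ∈ (0,1]`, `δ ∈ (0,1)`,
`ρ > -log(2/(1+δ)-1)/log(1+δ)`, and `λ* ∈ (0,1/2)` with
`H(λ*) = s·log(1+δ)`, for every `λ < λ*` the sum
`Σ_{w=1}^{⌊λn⌋} C(n,w)·(1/2 + (1/2)(1 - 2ρ·log(sn)/(sn))^w)^{sn}` tends to `0`. -/
theorem key_sum_tendsto_zero (s δ ρ lamStar lam : ℝ)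
    (hs : s ∈ Set.Ioc (0:ℝ) 1) (hδ : δ ∈ Set.Ioo (0:ℝ) 1)
    (hρ : -Real.log (2/(1+δ) - 1) / Real.log (1+δ) < ρ)
    (hstar : lamStar ∈ Set.Ioo (0:ℝ) (1/2))
    (hH : -lamStar * Real.log lamStar - (1 - lamStar) * Real.log (1 - lamStar)
      = s * Real.log (1 + δ))
    (hlam : lam < lamStar) :
    Tendsto (fun n : ℕ =>
      ∑ w ∈ Finset.Icc 1 ⌊lam * (n:ℝ)⌋₊,
        (n.choose w : ℝ) *
          (1/2 + 1/2 * (1 - 2 * (ρ * Real.log (s * n) / (s * n))) ^ w) ^ (s * (n:ℝ)))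
      atTop (nhds 0) := by
  rcases le_or_gt lam 0 with hlam0 | hlam0
  · have hW (n : ℕ) : ⌊lam * (n : ℝ)⌋₊ = 0 :=
      Nat.floor_of_nonpos (by nlinarith [n.cast_nonneg (α := ℝ)])
    simp [hW]
  have hentropy : binEntropy lam < s * log 2 := calc
    binEntropy lam < binEntropy lamStar :=
      binEntropy_strictMonoOn ⟨hlam0.le, by linarith [hstar.2]⟩
        ⟨hstar.1.le, by linarith [hstar.2]⟩ hlam
    _ = s * log (1 + δ) := by
      rw [← hH, binEntropy_eq_negMulLog_add_negMulLog_one_sub, negMulLog, negMulLog]; ring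
    _ < s * log 2 := by gcongr; exacts [hs.1, by linarith [hδ.1], by linarith [hδ.2]]
  exact tendsto_sum_choose_mul_rpow_zero hs.1 (two_lt_of_neg_log_div_log_lt hδ hρ) hlam0
    (by linarith [hstar.2]) hentropy
end

section
/- Consider a random XOR-formula Q over n Boolean variables consisting of ⌈sn⌉ independent XOR-clauses, each clause including each variable independently with probability f(n) and a random constant bit. Let g : ℕ → ℝ be nonnegative, and suppose f(n) ≤ 1 for large n and Σ_{w=1}^{⌊g(n)⌋} C(n,w)·(1/2 + (1/2)(1-2f(n))^w)^{sn} → 0 as n → ∞. Then with probability tending to 1, every pair of distinct solutions of Q has Hamming distance greater than g(n). -/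
open MeasureTheory Filter

/-- The Bernoulli measure on `Bool` with parameter `p` (truncated to `[0,1]`). -/
noncomputable def bern (p : ℝ) : Measure Bool :=
  (PMF.bernoulli (min (Real.toNNReal p) 1) (min_le_right _ _)).toMeasure

instance (p : ℝ) : IsProbabilityMeasure (bern p) := PMF.toMeasure.isProbabilityMeasure _

/-- A random XOR-clause over `n` variables: each variable is included independently with
probability `p`, and the constant bit `1` is included with probability `1/2`. -/
noncomputable def clauseM (n : ℕ) (p : ℝ) : Measure ((Fin n → Bool) × Bool) :=
  (Measure.pi fun _ : Fin n => bern p).prod (bern (1/2))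

instance (n : ℕ) (p : ℝ) : IsProbabilityMeasure (clauseM n p) := by
  unfold clauseM; infer_instance

/-- The random XOR-formula `Q^p(n, m)`: `m` independent random XOR-clauses. -/
noncomputable def formulaM (n m : ℕ) (p : ℝ) : Measure (Fin m → (Fin n → Bool) × Bool) :=
  Measure.pi fun _ : Fin m => clauseM n p

/-- An XOR-clause `(S, b)` is satisfied by `σ` iff the number of included variables set to
true, plus the constant bit, is odd. -/
def xorSat {n : ℕ} (c : (Fin n → Bool) × Bool) (σ : Fin n → Bool) : Prop :=
  Odd ((∑ i, if c.1 i && σ i then (1 : ℕ) else 0) + (if c.2 then 1 else 0))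

/-! Two solutions differing exactly on a set `A` of variables exist only if every clause
contains an even number of variables of `A`. For one random clause `S` this happens with
probability `E[(1 + (-1)^|S ∩ A|) / 2] = 1/2 + 1/2 (1 - 2p)^|A|`, because the signed expectation
factorises over the independent coordinates. A union bound over the `C(n, w)` sets `A` of each
size `1 ≤ w ≤ g(n)` bounds the probability of two close solutions by the sum in the hypothesis,
and `v^⌈sn⌉ ≤ v^(sn)` for `v ∈ [0, 1]`. -/

open Finset

lemma integral_bern {p : ℝ} (hp0 : 0 ≤ p) (hp1 : p ≤ 1) (φ : Bool → ℝ) :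
    ∫ b, φ b ∂bern p = p * φ true + (1 - p) * φ false := by
  simp [bern, PMF.integral_eq_sum, PMF.bernoulli_apply, hp0, hp1]

section Parity

variable {ι : Type*} [Fintype ι] {p : ℝ}

lemma neg_one_pow_card_filter_eq_prod [DecidableEq ι] (A : Finset ι) (S : ι → Bool) :
    (-1 : ℝ) ^ #{i ∈ A | S i} = ∏ i, if i ∈ A then (if S i then -1 else 1) else 1 := by
  rw [Fintype.prod_ite_mem, prod_ite]
  simp

lemma integral_pi_bern_neg_one_pow_card_filter (hp0 : 0 ≤ p) (hp1 : p ≤ 1) (A : Finset ι) :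
    ∫ S, (-1 : ℝ) ^ #{i ∈ A | S i} ∂Measure.pi (fun _ : ι => bern p) = (1 - 2 * p) ^ #A := by
  classical
  simp_rw [neg_one_pow_card_filter_eq_prod]
  rw [integral_fintype_prod_eq_prod (E := fun _ => Bool)
      (fun i b => if i ∈ A then (if b then -1 else 1) else 1),
    ← prod_const, ← Fintype.prod_ite_mem A (fun _ => 1 - 2 * p)]
  refine prod_congr rfl fun i _ => ?_
  rw [integral_bern hp0 hp1]
  by_cases hi : i ∈ A
  · simp [hi]; ring
  · simp [hi]

lemma measureReal_pi_bern_even_card_filter (hp0 : 0 ≤ p) (hp1 : p ≤ 1) (A : Finset ι) :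
    (Measure.pi fun _ : ι => bern p).real {S | Even #{i ∈ A | S i}}
      = 1 / 2 + 1 / 2 * (1 - 2 * p) ^ #A := by
  have hind : {S : ι → Bool | Even #{i ∈ A | S i}}.indicator 1
      = fun S => 1 / 2 + 1 / 2 * (-1 : ℝ) ^ #{i ∈ A | S i} := by
    ext S
    by_cases h : Even #{i ∈ A | S i}
    · simp [h, h.neg_one_pow]; norm_num
    · simp [h, (Nat.not_even_iff_odd.1 h).neg_one_pow]
  rw [← integral_indicator_one (Set.to_countable _).measurableSet, hind,
    integral_add (.of_finite) (.of_finite), integral_const_mul,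
    integral_pi_bern_neg_one_pow_card_filter hp0 hp1]
  simp

end Parity

lemma measureReal_clauseM_even_card_filter {n : ℕ} {p : ℝ} (hp0 : 0 ≤ p) (hp1 : p ≤ 1)
    (A : Finset (Fin n)) :
    (clauseM n p).real {c | Even #{i ∈ A | c.1 i}} = 1 / 2 + 1 / 2 * (1 - 2 * p) ^ #A := by
  have hprod : {c : (Fin n → Bool) × Bool | Even #{i ∈ A | c.1 i}}
      = {S | Even #{i ∈ A | S i}} ×ˢ Set.univ := by
    ext; simp
  rw [clauseM, hprod, measureReal_prod_prod, probReal_univ, mul_one,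
    measureReal_pi_bern_even_card_filter hp0 hp1]

lemma measureReal_formulaM_even_card_filter {n m : ℕ} {p : ℝ} (hp0 : 0 ≤ p) (hp1 : p ≤ 1)
    (A : Finset (Fin n)) :
    (formulaM n m p).real {Q | ∀ j, Even #{i ∈ A | (Q j).1 i}}
      = (1 / 2 + 1 / 2 * (1 - 2 * p) ^ #A) ^ m := by
  have hpi : {Q : Fin m → (Fin n → Bool) × Bool | ∀ j, Even #{i ∈ A | (Q j).1 i}}
      = Set.univ.pi fun _ => {c | Even #{i ∈ A | c.1 i}} := by
    ext; simp
  rw [formulaM, hpi, measureReal_def, Measure.pi_pi, ENNReal.toReal_prod]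
  simp [← measureReal_def, measureReal_clauseM_even_card_filter hp0 hp1]

lemma even_card_filter_ne_of_xorSat {n : ℕ} {c : (Fin n → Bool) × Bool} {σ τ : Fin n → Bool}
    (hσ : xorSat c σ) (hτ : xorSat c τ) : Even #{i ∈ {i | σ i ≠ τ i} | c.1 i} := by
  have hcoord : ∀ i, (if c.1 i && σ i then 1 else 0) + (if c.1 i && τ i then 1 else 0)
      = (if σ i ≠ τ i ∧ c.1 i then 1 else 0) + 2 * (if c.1 i && σ i && τ i then 1 else 0) := by
    intro i; cases c.1 i <;> cases σ i <;> cases τ i <;> rfl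
  have hsum : (∑ i, if c.1 i && σ i then 1 else 0) + (∑ i, if c.1 i && τ i then 1 else 0)
      = #{i ∈ {i | σ i ≠ τ i} | c.1 i} + 2 * ∑ i, if c.1 i && σ i && τ i then 1 else 0 := by
    rw [← sum_add_distrib, sum_congr rfl fun i _ => hcoord i, sum_add_distrib, ← mul_sum,
      filter_filter, card_filter]
  unfold xorSat at hσ hτ
  rw [Nat.odd_iff] at hσ hτ
  rw [Nat.even_iff]
  omega

instance (n m : ℕ) (p : ℝ) : IsProbabilityMeasure (formulaM n m p) := by
  unfold formulaM; infer_instance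

def HasCloseSolutions {n m : ℕ} (k : ℕ) (Q : Fin m → (Fin n → Bool) × Bool) : Prop :=
  ∃ σ τ : Fin n → Bool, (∀ j, xorSat (Q j) σ) ∧ (∀ j, xorSat (Q j) τ) ∧ σ ≠ τ ∧
    hammingDist σ τ ≤ k

lemma measureReal_formulaM_hasCloseSolutions_le {n m : ℕ} {p : ℝ} (hp0 : 0 ≤ p) (hp1 : p ≤ 1)
    (k : ℕ) :
    (formulaM n m p).real {Q | HasCloseSolutions k Q}
      ≤ ∑ w ∈ Icc 1 k, (n.choose w : ℝ) * (1 / 2 + 1 / 2 * (1 - 2 * p) ^ w) ^ m := by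
  have hcover : {Q | HasCloseSolutions k Q} ⊆ ⋃ w ∈ Icc 1 k, ⋃ A ∈ powersetCard w univ,
      {Q : Fin m → (Fin n → Bool) × Bool | ∀ j, Even #{i ∈ A | (Q j).1 i}} := by
    rintro Q ⟨σ, τ, hσ, hτ, hne, hdist⟩
    simp only [Set.mem_iUnion, exists_prop, mem_Icc, mem_powersetCard]
    exact ⟨_, ⟨hammingDist_pos.2 hne, hdist⟩, ({i | σ i ≠ τ i} : Finset _), ⟨subset_univ _, rfl⟩,
      fun j => even_card_filter_ne_of_xorSat (hσ j) (hτ j)⟩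
  calc _ ≤ _ := measureReal_mono hcover (measure_ne_top _ _)
    _ ≤ ∑ w ∈ Icc 1 k, ∑ A ∈ powersetCard w univ,
          (formulaM n m p).real {Q | ∀ j, Even #{i ∈ A | (Q j).1 i}} :=
        (measureReal_biUnion_finset_le _ _).trans
          (sum_le_sum fun w _ => measureReal_biUnion_finset_le _ _)
    _ = _ := by
      refine sum_congr rfl fun w _ => ?_
      rw [sum_congr rfl fun A hA => by
          rw [measureReal_formulaM_even_card_filter hp0 hp1, (mem_powersetCard.1 hA).2],
        sum_const, card_powersetCard, card_univ, Fintype.card_fin, nsmul_eq_mul]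

lemma one_half_add_one_half_mul_pow_mem_Icc {x : ℝ} (hx : |x| ≤ 1) (w : ℕ) :
    1 / 2 + 1 / 2 * x ^ w ∈ Set.Icc 0 1 := by
  have := abs_le.1 (abs_pow x w ▸ pow_le_one₀ (abs_nonneg x) hx)
  constructor <;> linarith

theorem whp_separated_of_sum_tendsto_zero_general (s : ℝ) (hs : 0 < s) (f g : ℕ → ℝ)
    (hf0 : ∀ n, 0 ≤ f n)
    (hf1 : ∀ᶠ n in atTop, f n ≤ 1)
    (hsum : Tendsto (fun n : ℕ =>
      ∑ w ∈ Finset.Icc 1 ⌊g n⌋₊,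
        (n.choose w : ℝ) * (1/2 + 1/2 * (1 - 2 * f n) ^ w) ^ (s * (n:ℝ)))
      atTop (nhds 0)) :
    Tendsto (fun n : ℕ =>
      formulaM n ⌈s * (n:ℝ)⌉₊ (f n)
        {Q | ∀ σ τ : Fin n → Bool, (∀ j, xorSat (Q j) σ) → (∀ j, xorSat (Q j) τ) →
          σ ≠ τ → g n < (hammingDist σ τ : ℝ)})
      atTop (nhds 1) := by
  set μ := fun n : ℕ => formulaM n ⌈s * (n:ℝ)⌉₊ (f n)
  have hbound : ∀ᶠ n in atTop, (μ n).real {Q | HasCloseSolutions ⌊g n⌋₊ Q} ≤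
      ∑ w ∈ Finset.Icc 1 ⌊g n⌋₊,
        (n.choose w : ℝ) * (1/2 + 1/2 * (1 - 2 * f n) ^ w) ^ (s * (n:ℝ)) := by
    filter_upwards [hf1] with n hfn
    refine (measureReal_formulaM_hasCloseSolutions_le (hf0 n) hfn _).trans
      (sum_le_sum fun w _ => mul_le_mul_of_nonneg_left ?_ (Nat.cast_nonneg _))
    obtain ⟨hv0, hv1⟩ := one_half_add_one_half_mul_pow_mem_Icc
      (abs_le.2 ⟨by linarith [hf0 n], by linarith [hf0 n]⟩ : |1 - 2 * f n| ≤ 1) w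
    rw [← Real.rpow_natCast]
    exact Real.rpow_le_rpow_of_exponent_ge' hv0 hv1 (by positivity) (Nat.le_ceil _)
  have hclose : Tendsto (fun n => (μ n).real {Q | HasCloseSolutions ⌊g n⌋₊ Q}) atTop (nhds 0) :=
    squeeze_zero' (Eventually.of_forall fun _ => measureReal_nonneg) hbound hsum
  have hfar : Tendsto (fun n => μ n {Q | HasCloseSolutions ⌊g n⌋₊ Q}ᶜ) atTop (nhds 1) := by
    have := ENNReal.tendsto_ofReal (hclose.const_sub 1)
    simpa [← probReal_compl_eq_one_sub (Set.to_countable _).measurableSet] using this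
  refine tendsto_of_tendsto_of_tendsto_of_le_of_le hfar tendsto_const_nhds
    (fun n => measure_mono ?_) (fun n => prob_le_one)
  intro Q hQ σ τ hσ hτ hne
  by_contra hle
  exact hQ ⟨σ, τ, hσ, hτ, hne, Nat.le_floor (not_lt.1 hle)⟩

/-- If the expected pair-count sum tends to `0`, then w.h.p. every pair of distinct
solutions of the random XOR-formula has Hamming distance greater than `g(n)`. -/
theorem whp_separated_of_sum_tendsto_zero (s : ℝ) (hs : 0 < s) (f g : ℕ → ℝ)
    (hf0 : ∀ n, 0 ≤ f n) (hg0 : ∀ n, 0 ≤ g n)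
    (hf1 : ∀ᶠ n in atTop, f n ≤ 1)
    (hsum : Tendsto (fun n : ℕ =>
      ∑ w ∈ Finset.Icc 1 ⌊g n⌋₊,
        (n.choose w : ℝ) * (1/2 + 1/2 * (1 - 2 * f n) ^ w) ^ (s * (n:ℝ)))
      atTop (nhds 0)) :
    Tendsto (fun n : ℕ =>
      formulaM n ⌈s * (n:ℝ)⌉₊ (f n)
        {Q | ∀ σ τ : Fin n → Bool, (∀ j, xorSat (Q j) σ) → (∀ j, xorSat (Q j) τ) →
          σ ≠ τ → g n < (hammingDist σ τ : ℝ)})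
      atTop (nhds 1) :=
  whp_separated_of_sum_tendsto_zero_general s hs f g hf0 hf1 hsum
end
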